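/- For every parameter valuation v, the Cumulative NDFS algorithm returns a set Accepted containing v if and only if the input graph contains an accepting cycle under the valuation v reachable from the initial state. -/

import Mathlib

namespace PTASynth

open Relation

variable {L P : Type} {n : ℕ} [Fintype P]

/-! ### Affine expressions over parameters -/

/-- Affine expressions `z₀ + z₁p₁ + … + zₘpₘ` with integer coefficients. -/
structure AffExpr (P : Type) where
  const : ℤ
  coef : P → ℤ

noncomputable def AffExpr.eval (e : AffExpr P) (v : P → ℤ) : ℤ :=
  e.const + ∑ p, e.coef p * v p

instance : Add (AffExpr P) :=
  ⟨fun e f => ⟨e.const + f.const, fun p => e.coef p + f.coef p⟩⟩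

def AffExpr.ofInt (z : ℤ) : AffExpr P := ⟨z, fun _ => 0⟩

open Classical in
noncomputable def AffExpr.var (p : P) : AffExpr P :=
  ⟨0, fun q => if q = p then 1 else 0⟩

/-- `max_{lb,ub}(e)`: replace positively occurring parameters by their upper bound and
negatively occurring ones by their lower bound. -/
noncomputable def AffExpr.maxVal (e : AffExpr P) (lb ub : P → ℤ) : ℤ :=
  e.const + ∑ p, (if 0 ≤ e.coef p then e.coef p * ub p else e.coef p * lb p)

/-- Extended affine expressions: `none` denotes `∞`. -/
abbrev EExpr (P : Type) := Option (AffExpr P)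

noncomputable def EExpr.eval (e : EExpr P) (v : P → ℤ) : WithTop ℤ :=
  match e with
  | none => ⊤
  | some e => (AffExpr.eval e v : WithTop ℤ)

def EExpr.add : EExpr P → EExpr P → EExpr P
  | some e, some f => some (e + f)
  | _, _ => none

/-! ### Parameter constraints -/

/-- Relation symbols for parameter constraints. -/
inductive CRel | lt | le | ge | gt
deriving DecidableEq

def CRel.holds : CRel → WithTop ℤ → WithTop ℤ → Prop
  | .lt, a, b => a < b
  | .le, a, b => a ≤ b
  | .ge, a, b => b ≤ a
  | .gt, a, b => b < a

def CRel.negRel : CRel → CRel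
  | .lt => .ge
  | .le => .gt
  | .ge => .lt
  | .gt => .le

/-- A parameter constraint `e ∼ e'`. -/
structure Constr (P : Type) where
  lhs : EExpr P
  rel : CRel
  rhs : EExpr P

def Constr.neg (c : Constr P) : Constr P := ⟨c.lhs, c.rel.negRel, c.rhs⟩

def Constr.sat (c : Constr P) (v : P → ℤ) : Prop :=
  c.rel.holds (EExpr.eval c.lhs v) (EExpr.eval c.rhs v)

/-- `⟦C⟧`: the set of parameter valuations satisfying a constraint set. -/
def csem (C : Set (Constr P)) : Set (P → ℤ) :=
  {v | ∀ c ∈ C, c.sat v}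

/-- `C ⊨ c`: the constraint `c` covers the constraint set `C`. -/
def Covers (C : Set (Constr P)) (c : Constr P) : Prop :=
  ∀ v ∈ csem C, c.sat v

/-! ### Clock valuations -/

/-- Clock valuations over clocks `Fin (n+1)`, clock `0` is the zero clock `x₀`. -/
structure ClockVal (n : ℕ) where
  val : Fin (n + 1) → ℝ
  zero_eq : val 0 = 0
  nonneg : ∀ x, 0 ≤ val x

def ClockVal.zeroVal (n : ℕ) : ClockVal n := ⟨fun _ => 0, rfl, fun _ => le_refl 0⟩

open Classical in
/-- `η⟨R⟩`: reset the clocks in `R` to `0`. -/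
noncomputable def ClockVal.reset (η : ClockVal n) (R : Set (Fin (n + 1))) : ClockVal n where
  val x := if x = 0 ∨ x ∈ R then 0 else η.val x
  zero_eq := by simp
  nonneg x := by
    try dsimp only
    split
    · exact le_rfl
    · exact η.nonneg x

/-! ### Guards -/

/-- A bound `(≺, e)` with `≺ ∈ {≤, <}` (`true` means `≤`) and `e ∈ E(P) ∪ {∞}`. -/
abbrev Bnd (P : Type) := Bool × EExpr P

def Bnd.sat (b : Bnd P) (v : P → ℤ) (r : ℝ) : Prop :=
  match b.2 with
  | none => True
  | some e => if b.1 then r ≤ (AffExpr.eval e v : ℝ) else r < (AffExpr.eval e v : ℝ)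

/-- An atomic guard `xᵢ - xⱼ ≺ e`. -/
structure Atom (n : ℕ) (P : Type) where
  i : Fin (n + 1)
  j : Fin (n + 1)
  le : Bool
  e : EExpr P

/-- A guard is a finite conjunction of atomic guards. -/
abbrev Guard (n : ℕ) (P : Type) := List (Atom n P)

def Atom.sat (a : Atom n P) (v : P → ℤ) (η : ClockVal n) : Prop :=
  Bnd.sat (a.le, a.e) v (η.val a.i - η.val a.j)

def Guard.sat (g : Guard n P) (v : P → ℤ) (η : ClockVal n) : Prop :=
  ∀ a ∈ g, a.sat v η

/-- Simple guards: one of the compared clocks is the zero clock and the bound is finite. -/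
def Atom.Simple (a : Atom n P) : Prop := (a.i = 0 ∨ a.j = 0) ∧ a.e ≠ none

def Guard.Simple (g : Guard n P) : Prop := ∀ a ∈ g, a.Simple

/-! ### Parametric timed (Büchi) automata -/

/-- A parametric timed automaton. -/
structure PTA (L : Type) (n : ℕ) (P : Type) where
  l0 : L
  trans : Set (L × Guard n P × Set (Fin (n + 1)) × L)
  Inv : L → Guard n P
  simple_trans : ∀ t ∈ trans, Guard.Simple t.2.1
  simple_Inv : ∀ l, Guard.Simple (Inv l)

/-- A parametric timed Büchi automaton. -/
structure PTBA (L : Type) (n : ℕ) (P : Type) extends PTA L n P where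
  F : Set L

/-! ### Concrete semantics `⟦A⟧_v` -/

abbrev CState (L : Type) (n : ℕ) := L × ClockVal n

/-- Delay transition `(l,η) →^d (l,η+d)`. -/
def DelayStep (M : PTA L n P) (v : P → ℤ) (s : CState L n) (d : ℝ) (s' : CState L n) : Prop :=
  s'.1 = s.1 ∧ 0 ≤ d ∧ (∀ x : Fin (n + 1), x ≠ 0 → s'.2.val x = s.2.val x + d) ∧
    Guard.sat (M.Inv s'.1) v s'.2

/-- Action transition `(l,η) →^act (l',η⟨R⟩)`. -/
def ActStep (M : PTA L n P) (v : P → ℤ) (s s' : CState L n) : Prop :=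
  ∃ g R, (s.1, g, R, s'.1) ∈ M.trans ∧ Guard.sat g v s.2 ∧
    s'.2 = s.2.reset R ∧ Guard.sat (M.Inv s'.1) v s'.2

/-- `s →^{act}_d s'`: an action transition followed by a delay transition. -/
def ActD (M : PTA L n P) (v : P → ℤ) (s s' : CState L n) : Prop :=
  ∃ s'' d, ActStep M v s s'' ∧ DelayStep M v s'' d s'

/-- `s →^{act₁,…,act_k}_d s'`: composition of `→^{act}_d` steps where each step is
labelled by the location of its source state. -/
def ActDSeq (M : PTA L n P) (v : P → ℤ) : List L → CState L n → CState L n → Prop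
  | [], s, s' => s = s'
  | l :: ls, s, s' => ∃ s'', s.1 = l ∧ ActD M v s s'' ∧ ActDSeq M v ls s'' s'

/-- `s (→^{act₁,…,act_k}_d)* s'`: one or more iterations of `→^{act₁,…,act_k}_d`. -/
def ActDSeqPlus (M : PTA L n P) (v : P → ℤ) (acts : List L) :
    CState L n → CState L n → Prop :=
  TransGen (ActDSeq M v acts)

/-! ### Time-abstracting simulations -/

def IsTASim (M : PTA L n P) (v : P → ℤ) (R : CState L n → CState L n → Prop) : Prop :=
  (∀ s1 s2 s1', R s1 s2 → ActStep M v s1 s1' →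
      ∃ s2', ActStep M v s2 s2' ∧ R s1' s2') ∧
  (∀ s1 s2 s1' (d1 : ℝ), R s1 s2 → DelayStep M v s1 d1 s1' →
      ∃ d2 s2', DelayStep M v s2 d2 s2' ∧ R s1' s2')

def IsTABisim (M : PTA L n P) (v : P → ℤ) (R : CState L n → CState L n → Prop) : Prop :=
  IsTASim M v R ∧ IsTASim M v (flip R)

/-- `s ≼ s'`: some time-abstracting simulation relates `s` to `s'`. -/
def Sim (M : PTA L n P) (v : P → ℤ) (s s' : CState L n) : Prop :=
  ∃ R, IsTASim M v R ∧ R s s'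

/-! ### Runs of `⟦A⟧_v` -/

/-- A proper run: an infinite alternating sequence of delay and action transitions,
beginning with a delay, starting in the initial state. -/
def ProperRun (A : PTBA L n P) (v : P → ℤ) (s : ℕ → CState L n) (d : ℕ → ℝ) : Prop :=
  s 0 = (A.l0, ClockVal.zeroVal n) ∧
  ∀ i, ∃ s', DelayStep A.toPTA v (s i) (d i) s' ∧ ActStep A.toPTA v s' (s (i + 1))

def AcceptingRun (A : PTBA L n P) (v : P → ℤ) (s : ℕ → CState L n) (d : ℕ → ℝ) : Prop :=
  ProperRun A v s d ∧ ∀ N, ∃ i, N ≤ i ∧ (s i).1 ∈ A.F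

/-- A run is Zeno if the sum of all its delays is finite (bounded). -/
def ZenoD (d : ℕ → ℝ) : Prop := ∃ B : ℝ, ∀ N, ∑ i ∈ Finset.range N, d i ≤ B

def HasAccRun (A : PTBA L n P) (v : P → ℤ) : Prop := ∃ s d, AcceptingRun A v s d

/-- The PTBA has no Zeno accepting runs. -/
def NoZeno (A : PTBA L n P) : Prop :=
  ∀ (v : P → ℤ) s d, AcceptingRun A v s d → ¬ ZenoD d

/-! ### (Constrained) parametric difference bound matrices -/

/-- A parametric difference bound matrix. -/
abbrev PDBM (n : ℕ) (P : Type) := Fin (n + 1) → Fin (n + 1) → Bnd P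

/-- `⟦D⟧_v`. -/
def PDBM.sem (D : PDBM n P) (v : P → ℤ) : Set (ClockVal n) :=
  {η | ∀ i j, Bnd.sat (D i j) v (η.val i - η.val j)}

/-- A constrained PDBM `(C, D)`. -/
abbrev CPDBM (n : ℕ) (P : Type) := Set (Constr P) × PDBM n P

/-- `⟦C,D⟧ = {(v,η) | v ∈ ⟦C⟧ ∧ η ∈ ⟦D⟧_v}`. -/
def CPDBM.sem (cd : CPDBM n P) : Set ((P → ℤ) × ClockVal n) :=
  {p | p.1 ∈ csem cd.1 ∧ p.2 ∈ PDBM.sem cd.2 p.1}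

open Classical in
noncomputable def PDBM.upd (D : PDBM n P) (i j : Fin (n + 1)) (b : Bnd P) : PDBM n P :=
  fun i' j' => if i' = i ∧ j' = j then b else D i' j'

/-- The constraint `e_ij (≺_ij ⟹ ≺) e` used when applying the guard atom
`x_i - x_j ≺ e` to a PDBM. -/
def atomConstr (D : PDBM n P) (a : Atom n P) : Constr P :=
  ⟨(D a.i a.j).2, if !(D a.i a.j).1 || a.le then CRel.le else CRel.lt, a.e⟩

/-- Applying a guard atom to a constrained PDBM (possibly splitting the constraint set). -/
inductive ApplyAtom : CPDBM n P → Atom n P → CPDBM n P → Prop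
  | keep (C : Set (Constr P)) (D : PDBM n P) (a : Atom n P) :
      Covers C (atomConstr D a) → ApplyAtom (C, D) a (C, D)
  | repl (C : Set (Constr P)) (D : PDBM n P) (a : Atom n P) :
      Covers C (atomConstr D a).neg →
      ApplyAtom (C, D) a (C, PDBM.upd D a.i a.j (a.le, a.e))
  | splitKeep (C : Set (Constr P)) (D : PDBM n P) (a : Atom n P) :
      ¬ Covers C (atomConstr D a) → ¬ Covers C (atomConstr D a).neg →
      ApplyAtom (C, D) a (insert (atomConstr D a) C, D)
  | splitRepl (C : Set (Constr P)) (D : PDBM n P) (a : Atom n P) :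
      ¬ Covers C (atomConstr D a) → ¬ Covers C (atomConstr D a).neg →
      ApplyAtom (C, D) a (insert (atomConstr D a).neg C, PDBM.upd D a.i a.j (a.le, a.e))

/-- Applying a conjunction of guard atoms. -/
inductive ApplyGuard : CPDBM n P → Guard n P → CPDBM n P → Prop
  | nil (cd : CPDBM n P) : ApplyGuard cd [] cd
  | cons {cd cd' cd'' : CPDBM n P} {a : Atom n P} {g : Guard n P} :
      ApplyAtom cd a cd' → ApplyGuard cd' g cd'' → ApplyGuard cd (a :: g) cd''

open Classical in
/-- `D⟨R⟩`: resetting a set of clocks. -/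
noncomputable def PDBM.reset (D : PDBM n P) (R : Set (Fin (n + 1))) : PDBM n P :=
  fun i j =>
    if i = j then D i j
    else D (if i ∈ R then 0 else i) (if j ∈ R then 0 else j)

open Classical in
/-- `D↑`: the time successor (remove all upper bounds on clocks). -/
noncomputable def PDBM.up (D : PDBM n P) : PDBM n P :=
  fun i j => if i ≠ 0 ∧ j = 0 then ((false : Bool), (none : EExpr P)) else D i j

/-- The guard atom `x_i - x_j (≺_ik ∧ ≺_kj) (e_ik + e_kj)` used by the parametric
Floyd–Warshall canonisation. -/
def fwAtom (D : PDBM n P) (k i j : Fin (n + 1)) : Atom n P :=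
  ⟨i, j, (D i k).1 && (D k j).1, EExpr.add (D i k).2 (D k j).2⟩

/-- One step of the nondeterministic parametric Floyd–Warshall algorithm. -/
inductive FWStep : ℕ × ℕ × ℕ × CPDBM n P → ℕ × ℕ × ℕ × CPDBM n P → Prop
  | relax (k i j : Fin (n + 1)) (cd cd' : CPDBM n P) :
      ApplyAtom cd (fwAtom cd.2 k i j) cd' →
      FWStep ((k : ℕ), (i : ℕ), (j : ℕ), cd) ((k : ℕ), (i : ℕ), (j : ℕ) + 1, cd')
  | nextI (k i : Fin (n + 1)) (cd : CPDBM n P) :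
      FWStep ((k : ℕ), (i : ℕ), n + 1, cd) ((k : ℕ), (i : ℕ) + 1, 0, cd)
  | nextK (k : Fin (n + 1)) (cd : CPDBM n P) :
      FWStep ((k : ℕ), n + 1, 0, cd) ((k : ℕ) + 1, 0, 0, cd)

/-- `(C',D') ∈ (C,D)_c`: membership in the canonical set. -/
def Canon (cd cd' : CPDBM n P) : Prop :=
  ReflTransGen FWStep (0, 0, 0, cd) (n + 1, 0, 0, cd')

/-! ### Symbolic semantics `⟦A⟧` -/

abbrev SymState (L : Type) (n : ℕ) (P : Type) := L × CPDBM n P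

/-- The symbolic transition relation `⟹` of `⟦A⟧`. -/
def SymStep (A : PTBA L n P) (S S' : SymState L n P) : Prop :=
  ∃ g R, (S.1, g, R, S'.1) ∈ A.trans ∧
    ∃ cd1 cd2 cd3, ApplyGuard S.2 g cd1 ∧ Canon cd1 cd2 ∧
      ApplyGuard (cd2.1, PDBM.up (PDBM.reset cd2.2 R)) (A.Inv S'.1) cd3 ∧ Canon cd3 S'.2

/-- The constraints `lb(p) ≤ p ≤ ub(p)` for all parameters `p`. -/
noncomputable def boundC (lb ub : P → ℤ) : Set (Constr P) :=
  {c | ∃ p : P, c = ⟨some (AffExpr.var p), CRel.ge, some (AffExpr.ofInt (lb p))⟩ ∨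
                c = ⟨some (AffExpr.var p), CRel.le, some (AffExpr.ofInt (ub p))⟩}

/-- The PDBM with all entries `(0, ≤)`. -/
def E0 (n : ℕ) (P : Type) : PDBM n P := fun _ _ => ((true : Bool), some (AffExpr.ofInt 0))

/-- The initial symbolic states of `⟦A⟧`. -/
def SymInit (A : PTBA L n P) (lb ub : P → ℤ) : Set (SymState L n P) :=
  {S | S.1 = A.l0 ∧ ApplyGuard (boundC lb ub, PDBM.up (E0 n P)) (A.Inv A.l0) S.2}

/-- The (reachable) symbolic states of `⟦A⟧`. -/
def SymStates (A : PTBA L n P) (lb ub : P → ℤ) : Set (SymState L n P) :=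
  {S | ∃ S0 ∈ SymInit A lb ub, ReflTransGen (SymStep A) S0 S}

/-- `s ∈_v S`: the concrete state `s` is contained in the symbolic state `S` under `v`. -/
def InV (v : P → ℤ) (s : CState L n) (S : SymState L n P) : Prop :=
  s.1 = S.1 ∧ v ∈ csem S.2.1 ∧ s.2 ∈ PDBM.sem S.2.2 v

/-! ### Abstractions -/

abbrev Abstr (L : Type) (n : ℕ) (P : Type) := SymState L n P → Set (SymState L n P)

/-- `α` is an abstraction over `⟦A⟧`. -/
def IsAbstraction (A : PTBA L n P) (α : Abstr L n P) : Prop :=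
  (∀ S Q, Q ∈ α S → Q.1 = S.1 ∧ csem Q.2.1 ⊆ csem S.2.1 ∧
      CPDBM.sem (Q.2.1, S.2.2) ⊆ CPDBM.sem Q.2) ∧
  (∀ S Q, Q ∈ α S → ∀ (v : P → ℤ) (s : CState L n), InV v s Q →
      ∃ s', InV v s' S ∧ Sim A.toPTA v s s')

/-- The transition relation `⟹^α` of the induced transition system `⟦A⟧^α`. -/
def AbsStep (A : PTBA L n P) (α : Abstr L n P) (Q Q' : SymState L n P) : Prop :=
  ∃ S, SymStep A Q S ∧ Q' ∈ α S

/-- The initial states of `⟦A⟧^α`. -/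
def AbsInit (A : PTBA L n P) (lb ub : P → ℤ) (α : Abstr L n P) : Set (SymState L n P) :=
  {Q | ∃ S ∈ SymInit A lb ub, Q ∈ α S}

/-- The states of `⟦A⟧^α`. -/
def AbsStates (A : PTBA L n P) (lb ub : P → ℤ) (α : Abstr L n P) : Set (SymState L n P) :=
  {Q | ∃ Q0 ∈ AbsInit A lb ub α, ReflTransGen (AbsStep A α) Q0 Q}

/-- The semantic content `(l, ⟦C⟧, ⟦C,D⟧)` of a symbolic state. -/
def semClass (Q : SymState L n P) : L × Set (P → ℤ) × Set ((P → ℤ) × ClockVal n) :=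
  (Q.1, csem Q.2.1, CPDBM.sem Q.2)

/-- `α` is a finite abstraction: the induced state space is finite (up to semantics). -/
def FiniteAbs (A : PTBA L n P) (lb ub : P → ℤ) (α : Abstr L n P) : Prop :=
  (semClass '' AbsStates A lb ub α).Finite

/-- There is an accepting run of `⟦A⟧^α` respecting `v`. -/
def AbsAccRun (A : PTBA L n P) (lb ub : P → ℤ) (α : Abstr L n P) (v : P → ℤ) : Prop :=
  ∃ ρ : ℕ → SymState L n P, ρ 0 ∈ AbsInit A lb ub α ∧
    (∀ i, AbsStep A α (ρ i) (ρ (i + 1))) ∧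
    (∀ i, v ∈ csem (ρ i).2.1) ∧
    (∀ N, ∃ i, N ≤ i ∧ (ρ i).1 ∈ A.F)

/-- `Q ⟹^α … ⟹^α Q'` via transitions labelled by the locations of their source states. -/
def AbsSeq (A : PTBA L n P) (α : Abstr L n P) :
    List L → SymState L n P → SymState L n P → Prop
  | [], Q, Q' => Q = Q'
  | l :: ls, Q, Q'' => ∃ Q', Q.1 = l ∧ AbsStep A α Q Q' ∧ AbsSeq A α ls Q' Q''

/-! ### The pk-extrapolation -/

def guardsOf (A : PTBA L n P) : Set (Guard n P) :=
  {g | (∃ t ∈ A.trans, t.2.1 = g) ∨ (∃ l, A.Inv l = g)}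

/-- The affine expressions compared with the clock `x` in a guard or invariant of `A`. -/
def comparedWith (A : PTBA L n P) (x : Fin (n + 1)) : Set (AffExpr P) :=
  {e | ∃ g ∈ guardsOf A, ∃ a ∈ g, (a.i = x ∨ a.j = x) ∧ a.e = some e}

/-- `M(x)`: the maximal constant with which the clock `x` is compared. -/
noncomputable def Mmax (A : PTBA L n P) (lb ub : P → ℤ) (x : Fin (n + 1)) : ℤ :=
  sSup ((fun e => AffExpr.maxVal e lb ub) '' comparedWith A x)

/-- The four possible ways the pk-extrapolation treats the entry `(i,j)` with maximal
constants `Mi = M(x_i)` and `Mj = M(x_j)`. -/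
def PkEntry (Mi Mj : ℤ) (old new : Bnd P) (c : Constr P) : Prop :=
  (new = old ∧ c = ⟨old.2, CRel.le, some (AffExpr.ofInt Mi)⟩) ∨
  (new = ((false : Bool), (none : EExpr P)) ∧ c = ⟨old.2, CRel.gt, some (AffExpr.ofInt Mi)⟩) ∨
  (new = old ∧ c = ⟨old.2, CRel.ge, some (AffExpr.ofInt (-Mj))⟩) ∨
  (new = ((false : Bool), some (AffExpr.ofInt (-Mj))) ∧
    c = ⟨old.2, CRel.lt, some (AffExpr.ofInt (-Mj))⟩)

/-- The pk-extrapolation `α_pk`. -/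
noncomputable def pkExtra (A : PTBA L n P) (lb ub : P → ℤ) : Abstr L n P :=
  fun S => {Q | Q.1 = S.1 ∧
    ∃ f : Fin (n + 1) → Fin (n + 1) → Bnd P × Constr P,
      (∀ i j, PkEntry (Mmax A lb ub i) (Mmax A lb ub j) (S.2.2 i j) (f i j).1 (f i j).2) ∧
      (∀ i j, Q.2.2 i j = (f i j).1) ∧
      Q.2.1 = S.2.1 ∪ {c | ∃ i j, c = (f i j).2}}

/-! ### Region equivalence -/

/-- The maximal constant to which the clock `x` is compared in `A|v`. -/
noncomputable def cmax (A : PTBA L n P) (v : P → ℤ) (x : Fin (n + 1)) : ℤ :=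
  sSup ((fun e => AffExpr.eval e v) '' comparedWith A x)

/-- The standard region equivalence `≡_{A|v}` on the states of `⟦A⟧_v`. -/
def RegionEquiv (A : PTBA L n P) (v : P → ℤ) (s s' : CState L n) : Prop :=
  s.1 = s'.1 ∧
  (∀ x : Fin (n + 1),
      ((cmax A v x : ℝ) < s.2.val x ∧ (cmax A v x : ℝ) < s'.2.val x) ∨
      (⌊s.2.val x⌋ = ⌊s'.2.val x⌋ ∧ (Int.fract (s.2.val x) = 0 ↔ Int.fract (s'.2.val x) = 0))) ∧
  (∀ x y : Fin (n + 1),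
      s.2.val x ≤ (cmax A v x : ℝ) → s.2.val y ≤ (cmax A v y : ℝ) →
      (Int.fract (s.2.val x) ≤ Int.fract (s.2.val y) ↔
        Int.fract (s'.2.val x) ≤ Int.fract (s'.2.val y)))

/-! ### The Cumulative NDFS algorithm -/

variable {S V : Type}

/-- A finite Büchi graph whose states carry monotone sets of parameter valuations. -/
structure NGraph (S V : Type) where
  succ : S → List S
  init : S
  acc : S → Prop
  C : S → Set V
  mono : ∀ s s', s' ∈ succ s → C s' ⊆ C s

/-- Control frames of the Cumulative NDFS machine. -/
inductive NFrame (S : Type)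
  | callOuter (s : S)
  | outer (s : S) (rest : List S)
  | outerPop (s : S)
  | callInner (s : S)
  | inner (s : S) (rest : List S)

/-- Configurations of the Cumulative NDFS machine. -/
structure NConfig (S V : Type) where
  found : Set V
  outer : Set S
  inner : Set S
  stack : Set S
  ctrl : List (NFrame S)

/-- Small-step semantics of the Cumulative NDFS algorithm. -/
inductive NStep (G : NGraph S V) : NConfig S V → NConfig S V → Prop
  | callOuter (F O I St s k) :
      NStep G ⟨F, O, I, St, .callOuter s :: k⟩
              ⟨F, insert s O, I, insert s St, .outer s (G.succ s) :: k⟩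
  | outerSkip (F O I St s s' rest k) :
      (s' ∈ O ∨ s' ∈ St ∨ G.C s' ⊆ F) →
      NStep G ⟨F, O, I, St, .outer s (s' :: rest) :: k⟩
              ⟨F, O, I, St, .outer s rest :: k⟩
  | outerRec (F O I St s s' rest k) :
      s' ∉ O → s' ∉ St → ¬ G.C s' ⊆ F →
      NStep G ⟨F, O, I, St, .outer s (s' :: rest) :: k⟩
              ⟨F, O, I, St, .callOuter s' :: .outer s rest :: k⟩
  | outerAcc (F O I St s k) :
      G.acc s → ¬ G.C s ⊆ F →
      NStep G ⟨F, O, I, St, .outer s [] :: k⟩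
              ⟨F, O, I, St, .callInner s :: .outerPop s :: k⟩
  | outerDone (F O I St s k) :
      ¬ (G.acc s ∧ ¬ G.C s ⊆ F) →
      NStep G ⟨F, O, I, St, .outer s [] :: k⟩ ⟨F, O, I, St \ {s}, k⟩
  | outerPop (F O I St s k) :
      NStep G ⟨F, O, I, St, .outerPop s :: k⟩ ⟨F, O, I, St \ {s}, k⟩
  | callInner (F O I St s k) :
      NStep G ⟨F, O, I, St, .callInner s :: k⟩
              ⟨F, O, insert s I, St, .inner s (G.succ s) :: k⟩
  | innerFound (F O I St s s' rest k) :
      s' ∈ St →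
      NStep G ⟨F, O, I, St, .inner s (s' :: rest) :: k⟩ ⟨F ∪ G.C s', O, I, St, k⟩
  | innerRec (F O I St s s' rest k) :
      s' ∉ St → s' ∉ I → ¬ G.C s' ⊆ F →
      NStep G ⟨F, O, I, St, .inner s (s' :: rest) :: k⟩
              ⟨F, O, I, St, .callInner s' :: .inner s rest :: k⟩
  | innerSkip (F O I St s s' rest k) :
      s' ∉ St → (s' ∈ I ∨ G.C s' ⊆ F) →
      NStep G ⟨F, O, I, St, .inner s (s' :: rest) :: k⟩ ⟨F, O, I, St, .inner s rest :: k⟩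
  | innerDone (F O I St s k) :
      NStep G ⟨F, O, I, St, .inner s [] :: k⟩ ⟨F, O, I, St, k⟩

/-- The initial configuration of the Cumulative NDFS algorithm. -/
def initConfig (G : NGraph S V) : NConfig S V := ⟨∅, ∅, ∅, ∅, [.callOuter G.init]⟩

/-- The edge relation of the graph. -/
def Edge (G : NGraph S V) (s s' : S) : Prop := s' ∈ G.succ s

/-- One edge of a cycle under the valuation `v`: both endpoints carry `v`. -/
def StepUnder (G : NGraph S V) (v : V) (s s' : S) : Prop :=
  s' ∈ G.succ s ∧ v ∈ G.C s ∧ v ∈ G.C s'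

/-- The step from `c` to `c'` backtracks (in `OuterDFS`) from the state `q`. -/
def Backtracks (G : NGraph S V) (q : S) (c c' : NConfig S V) : Prop :=
  NStep G c c' ∧
    ((∃ k, c.ctrl = NFrame.outer q [] :: k ∧ c'.ctrl = k) ∨
     (∃ k, c.ctrl = NFrame.outerPop q :: k))


/-! Soundness: `Found` only grows by `⟦C⟧` of a state `s'` on the outer stack, reached by an inner
search seeded at the top `q` of that stack. The outer stack is a path `s_init →* s' →* q` and the
inner stack a path `q →* s → s'`; since valuation sets only shrink along edges, every valuation of
`s'` lies on an accepting cycle through `q`.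

Completeness: when the run ends, every reachable state is visited or covered by `Found`, and every
visited accepting state that is not covered has been a seed. Under a valuation `u ∉ Found`, the
states explored by the inner search from a seed `q` have all their `u`-successors explored and off
the outer stack; as `q` is on that stack, no `u`-cycle returns to `q`. -/

section CumulativeNDFS

variable {G : NGraph S V}

theorem C_subset_of_reflTransGen {a b : S} (h : ReflTransGen (Edge G) a b) : G.C b ⊆ G.C a := by
  induction h with
  | refl => exact subset_rfl
  | tail _ e ih => exact (G.mono _ _ e).trans ih

theorem reflTransGen_stepUnder {u : V} {a b : S} (h : ReflTransGen (Edge G) a b)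
    (hu : u ∈ G.C b) : ReflTransGen (StepUnder G u) a b := by
  induction h with
  | refl => exact .refl
  | tail _ e ih => exact (ih (G.mono _ _ e hu)).tail ⟨e, G.mono _ _ e hu, hu⟩

theorem transGen_stepUnder_of_cycle {u : V} {q s s' : S} (hqs : ReflTransGen (Edge G) q s)
    (hs' : s' ∈ G.succ s) (hs'q : ReflTransGen (Edge G) s' q) (hu : u ∈ G.C s') :
    TransGen (StepUnder G u) q q := by
  have huq : u ∈ G.C q := C_subset_of_reflTransGen (hqs.tail hs') hu
  have hus : u ∈ G.C s := G.mono s s' hs' hu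
  exact TransGen.trans_right (reflTransGen_stepUnder hqs hus)
    (.head' ⟨hs', hus, hu⟩ (reflTransGen_stepUnder hs'q huq))

theorem mem_C_of_transGen_stepUnder {u : V} {a b : S} (h : TransGen (StepUnder G u) a b) :
    u ∈ G.C b := by
  cases h with
  | single h => exact h.2.2
  | tail _ h => exact h.2.2

variable (G) in
def HasReachableAccCycle (u : V) : Prop :=
  ∃ q : S, G.acc q ∧ ReflTransGen (Edge G) G.init q ∧ TransGen (StepUnder G u) q q

variable (G) in
/-- A DFS stack, top first: empty, or a path of `G` from `root` read from the bottom. -/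
inductive IsDFSStack (root : S) : List S → Prop
  | nil : IsDFSStack root []
  | single : IsDFSStack root [root]
  | push {s t : S} {τ : List S} : IsDFSStack root (t :: τ) → s ∈ G.succ t →
      IsDFSStack root (s :: t :: τ)

theorem IsDFSStack.tail {root s : S} {τ : List S} (h : IsDFSStack G root (s :: τ)) :
    IsDFSStack G root τ := by
  cases h with
  | single => exact .nil
  | push h _ => exact h

theorem IsDFSStack.reach {root s w : S} {τ : List S} (h : IsDFSStack G root (s :: τ))
    (hw : w ∈ s :: τ) : ReflTransGen (Edge G) root w ∧ ReflTransGen (Edge G) w s := by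
  induction τ generalizing s w with
  | nil =>
    cases h
    obtain rfl := List.mem_singleton.1 hw
    exact ⟨.refl, .refl⟩
  | cons t τ ih =>
    cases h with
    | push h hst =>
      rcases List.mem_cons.1 hw with rfl | hw
      · exact ⟨(ih h List.mem_cons_self).1.tail hst, .refl⟩
      · exact (ih h hw).imp id (·.tail hst)

variable (G) in
def RemainingSucc (good : S → Prop) (s : S) (rest : List S) : Prop :=
  (∀ x ∈ rest, x ∈ G.succ s) ∧ ∀ x ∈ G.succ s, x ∈ rest ∨ good x

theorem RemainingSucc.self {good : S → Prop} {s : S} : RemainingSucc G good s (G.succ s) :=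
  ⟨fun _ h => h, fun _ h => .inl h⟩

theorem RemainingSucc.mono {good good' : S → Prop} {s : S} {rest : List S}
    (h : RemainingSucc G good s rest) (hg : ∀ x, good x → good' x) :
    RemainingSucc G good' s rest :=
  ⟨h.1, fun x hx => (h.2 x hx).imp id (hg x)⟩

theorem RemainingSucc.tail {good : S → Prop} {s x : S} {rest : List S}
    (h : RemainingSucc G good s (x :: rest)) (hx : good x) : RemainingSucc G good s rest := by
  refine ⟨fun y hy => h.1 y (List.mem_cons_of_mem _ hy), fun y hy => ?_⟩
  rcases h.2 y hy with hy | hy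
  · rcases List.mem_cons.1 hy with rfl | hy
    exacts [.inr hx, .inl hy]
  · exact .inr hy

theorem RemainingSucc.nil {good : S → Prop} {s : S} (h : RemainingSucc G good s []) :
    ∀ x ∈ G.succ s, good x :=
  fun x hx => (h.2 x hx).resolve_left List.not_mem_nil

variable (G) in
inductive Frames (mk : S → List S → NFrame S) (good : S → Prop) (base : List (NFrame S)) :
    List (NFrame S) → List S → Prop
  | nil : Frames mk good base base []
  | cons {ks : List (NFrame S)} {τ : List S} {s : S} {rest : List S} :
      Frames mk good base ks τ → RemainingSucc G good s rest →
      Frames mk good base (mk s rest :: ks) (s :: τ)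

theorem Frames.mono {mk : S → List S → NFrame S} {good good' : S → Prop}
    {base ks : List (NFrame S)} {τ : List S} (h : Frames G mk good base ks τ)
    (hg : ∀ x, good x → good' x) : Frames G mk good' base ks τ := by
  induction h with
  | nil => exact .nil
  | cons _ hr ih => exact .cons ih (hr.mono hg)

variable (G) in
def OuterHandled (F : Set V) (O : Set S) (x : S) : Prop := x ∈ O ∨ G.C x ⊆ F

variable (G) in
def InnerHandled (F : Set V) (I St : Set S) (x : S) : Prop := x ∉ St ∧ (x ∈ I ∨ G.C x ⊆ F)

theorem OuterHandled.mono {F F' : Set V} {O O' : Set S} (hF : F ⊆ F') (hO : O ⊆ O') (x : S)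
    (h : OuterHandled G F O x) : OuterHandled G F' O' x :=
  h.imp (@hO x) (·.trans hF)

theorem InnerHandled.mono {F F' : Set V} {I I' St St' : Set S} (hF : F ⊆ F') (hI : I ⊆ I')
    (hSt : St' ⊆ St) (x : S) (h : InnerHandled G F I St x) : InnerHandled G F' I' St' x :=
  ⟨fun hx => h.1 (hSt hx), h.2.imp (@hI x) (·.trans hF)⟩

theorem not_transGen_stepUnder_of_closed {F : Set V} {I St : Set S} {u : V} {s : S}
    (hcl : ∀ x ∈ I, G.C x ⊆ F ∨ ∀ y ∈ G.succ x, InnerHandled G F I St y) (hu : u ∉ F)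
    (hsI : s ∈ I) (hsSt : s ∈ St) : ¬ TransGen (StepUnder G u) s s := by
  intro hcyc
  obtain ⟨z, hsz, hzs⟩ := TransGen.tail'_iff.1 hcyc
  have hsucc : ∀ x ∈ I, ∀ y, StepUnder G u x y → InnerHandled G F I St y := fun x hx y hxy =>
    ((hcl x hx).resolve_left fun hC => hu (hC hxy.2.1)) y hxy.1
  have hzI : z ∈ I := by
    clear hzs
    induction hsz with
    | refl => exact hsI
    | tail _ hxy ih => exact ((hsucc _ ih _ hxy).2).resolve_right fun hC => hu (hC hxy.2.2)
  exact (hsucc z hzI s hzs).1 hsSt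

variable (G) in
/-- The control stack while the outer search has stack `σ` and no inner search runs (`τ = []`), or
while an inner search from the seed `q` on top of the outer stack runs with stack `τ`. -/
inductive CtrlShape (F : Set V) (O I St : Set S) :
    List (NFrame S) → List S → List S → Prop
  | outer {ks : List (NFrame S)} {σ : List S} :
      Frames G .outer (OuterHandled G F O) [] ks σ → (∀ x ∈ I, x ∉ St) →
      CtrlShape F O I St ks σ []
  | inner {k ks : List (NFrame S)} {σ τ : List S} {q : S} :
      Frames G .outer (OuterHandled G F O) [] k σ → G.acc q → q ∈ I →
      (∀ x ∈ G.succ q, OuterHandled G F O x) → (∀ x ∈ I, x ∈ St → x = q) →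
      Frames G .inner (InnerHandled G F I St) (.outerPop q :: k) ks τ → IsDFSStack G q τ →
      (∀ x ∈ τ, x ∈ I) → CtrlShape F O I St ks (q :: σ) τ

variable (G) in
structure Invariant (F : Set V) (O I St : Set S) (ks : List (NFrame S)) (σ τ : List S) : Prop where
  shape : CtrlShape G F O I St ks σ τ
  stack_eq : St = {x | x ∈ σ}
  nodup : σ.Nodup
  isDFSStack : IsDFSStack G G.init σ
  init_mem : G.init ∈ O
  stack_subset : St ⊆ O
  inner_subset : I ⊆ O
  outer_closed : ∀ x ∈ O, x ∉ St → ∀ y ∈ G.succ x, OuterHandled G F O y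
  inner_closed : ∀ x ∈ I, x ∉ τ → G.C x ⊆ F ∨ ∀ y ∈ G.succ x, InnerHandled G F I St y
  acc_mem : ∀ x ∈ O, G.acc x → x ∈ St ∨ x ∈ I ∨ G.C x ⊆ F
  no_cycle : ∀ x ∈ I, G.acc x → x ∉ St → ∀ u ∉ F, ¬ TransGen (StepUnder G u) x x
  found_sound : ∀ u ∈ F, HasReachableAccCycle G u

namespace Invariant

variable {F : Set V} {O I St : Set S} {k : List (NFrame S)} {σ τ rest : List S} {s s' : S}

theorem outerSkip (h : Invariant G F O I St (.outer s (s' :: rest) :: k) σ τ)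
    (hs' : s' ∈ O ∨ s' ∈ St ∨ G.C s' ⊆ F) :
    Invariant G F O I St (.outer s rest :: k) σ τ := by
  have hs'h : OuterHandled G F O s' := by
    rcases hs' with hs' | hs' | hs'
    exacts [.inl hs', .inl (h.stack_subset hs'), .inr hs']
  refine { h with shape := ?_ }
  have hshape := h.shape
  cases hshape with
  | outer hfr hI =>
    cases hfr with
    | cons hfr hr => exact .outer (.cons hfr (hr.tail hs'h)) hI
  | inner _ _ _ _ _ hinn _ _ => cases hinn

theorem outerPush (h : Invariant G F O I St (.outer s (s' :: rest) :: k) σ τ)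
    (hO : s' ∉ O) (hSt : s' ∉ St) (hF : ¬ G.C s' ⊆ F) :
    Invariant G F (insert s' O) I (insert s' St) (.outer s' (G.succ s') :: .outer s rest :: k)
      (s' :: σ) τ := by
  have hshape := h.shape
  cases hshape with
  | inner _ _ _ _ _ hinn _ _ => cases hinn
  | outer hfr hI =>
  cases hfr with
  | cons hfr hr =>
  have hmono := OuterHandled.mono (G := G) (F := F) subset_rfl (Set.subset_insert s' O)
  have hI' : s' ∉ I := fun hs'I => hO (h.inner_subset hs'I)
  refine
    { shape := .outer
        (.cons (.cons (hfr.mono hmono) ((hr.mono hmono).tail (.inl (Set.mem_insert _ _)))) .self)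
        fun x hx hxSt => (Set.mem_insert_iff.1 hxSt).elim (fun e => hI' (e ▸ hx)) (hI x hx)
      stack_eq := by ext x; simp [h.stack_eq]
      nodup := List.nodup_cons.2 ⟨fun hs'σ => hSt (h.stack_eq ▸ hs'σ), h.nodup⟩
      isDFSStack := .push h.isDFSStack (hr.1 s' List.mem_cons_self)
      init_mem := Set.mem_insert_of_mem _ h.init_mem
      stack_subset := Set.insert_subset_insert h.stack_subset
      inner_subset := h.inner_subset.trans (Set.subset_insert _ _)
      outer_closed := fun x hx hxSt y hy => ?_
      inner_closed := fun x hx hxτ => ?_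
      acc_mem := fun x hx hacc => ?_
      no_cycle := fun x hx hacc hxSt => h.no_cycle x hx hacc (fun h' => hxSt (.inr h'))
      found_sound := h.found_sound }
  · have hxO : x ∈ O := (Set.mem_insert_iff.1 hx).resolve_left fun e => hxSt (.inl e)
    exact hmono y (h.outer_closed x hxO (fun h' => hxSt (.inr h')) y hy)
  · refine (h.inner_closed x hx hxτ).imp id fun hcl y hy => ?_
    obtain ⟨hySt, hyI⟩ := hcl y hy
    refine ⟨fun hy' => (Set.mem_insert_iff.1 hy').elim (fun e => ?_) hySt, hyI⟩
    subst e
    exact hyI.elim hI' hF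
  · rcases Set.mem_insert_iff.1 hx with rfl | hx
    · exact .inl (.inl rfl)
    · rcases h.acc_mem x hx hacc with h' | h'
      exacts [.inl (.inr h'), .inr h']

theorem startInner (h : Invariant G F O I St (.outer s [] :: k) σ τ) (hacc : G.acc s) :
    Invariant G F O (insert s I) St (.inner s (G.succ s) :: .outerPop s :: k) σ [s] := by
  have hshape := h.shape
  cases hshape with
  | inner _ _ _ _ _ hinn _ _ => cases hinn
  | outer hfr hI =>
  cases hfr with
  | cons hfr hr =>
  have hsSt : s ∈ St := h.stack_eq ▸ List.mem_cons_self
  have hinner := InnerHandled.mono (G := G) (F := F) (St := St) subset_rfl (Set.subset_insert s I)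
    subset_rfl
  refine
    { h with
      shape := .inner hfr hacc (Set.mem_insert _ _) hr.nil
        (fun x hx hxSt => (Set.mem_insert_iff.1 hx).resolve_right fun hx => hI x hx hxSt)
        (.cons .nil .self) .single (by simp)
      inner_subset := Set.insert_subset (h.stack_subset hsSt) h.inner_subset
      inner_closed := fun x hx hxτ => ?_
      acc_mem := fun x hx hacc => (h.acc_mem x hx hacc).imp_right (Or.imp_left (.inr ·))
      no_cycle := fun x hx hacc hxSt => ?_ }
  · have hxI : x ∈ I :=
      (Set.mem_insert_iff.1 hx).resolve_left fun e => hxτ (e ▸ List.mem_singleton_self _)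
    exact (h.inner_closed x hxI List.not_mem_nil).imp_right fun hcl y hy => hinner y (hcl y hy)
  · rcases Set.mem_insert_iff.1 hx with rfl | hx
    exacts [absurd hsSt hxSt, h.no_cycle x hx hacc hxSt]

theorem pop {ks : List (NFrame S)} (h : Invariant G F O I St ks (s :: σ) [])
    (hk : CtrlShape G F O I (St \ {s}) k σ [])
    (hclosed : ∀ y ∈ G.succ s, OuterHandled G F O y) (hacc : G.acc s → s ∈ I ∨ G.C s ⊆ F)
    (hcyc : s ∈ I → ∀ u ∉ F, ¬ TransGen (StepUnder G u) s s) :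
    Invariant G F O I (St \ {s}) k σ [] := by
  have hsσ : s ∉ σ := (List.nodup_cons.1 h.nodup).1
  have hpopped {x : S} (hxSt : x ∉ St \ {s}) (hxs : x ≠ s) : x ∉ St := fun h' => hxSt ⟨h', hxs⟩
  refine
    { h with
      shape := hk
      stack_eq := by ext x; simp [h.stack_eq]; grind
      nodup := (List.nodup_cons.1 h.nodup).2
      isDFSStack := h.isDFSStack.tail
      stack_subset := Set.sdiff_subset.trans h.stack_subset
      outer_closed := fun x hx hxSt => ?_
      inner_closed := fun x hx hxτ => (h.inner_closed x hx hxτ).imp_right fun hcl y hy =>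
        InnerHandled.mono subset_rfl subset_rfl Set.sdiff_subset y (hcl y hy)
      acc_mem := fun x hx hxacc => ?_
      no_cycle := fun x hx hxacc hxSt => ?_ }
  · rcases eq_or_ne x s with rfl | hxs
    exacts [hclosed, h.outer_closed x hx (hpopped hxSt hxs)]
  · rcases eq_or_ne x s with rfl | hxs
    exacts [.inr (hacc hxacc), (h.acc_mem x hx hxacc).imp_left fun h' => ⟨h', hxs⟩]
  · rcases eq_or_ne x s with rfl | hxs
    exacts [hcyc hx, h.no_cycle x hx hxacc (hpopped hxSt hxs)]

theorem outerDone (h : Invariant G F O I St (.outer s [] :: k) σ τ)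
    (hnd : ¬ (G.acc s ∧ ¬ G.C s ⊆ F)) : Invariant G F O I (St \ {s}) k σ.tail [] := by
  have hshape := h.shape
  cases hshape with
  | inner _ _ _ _ _ hinn _ _ => cases hinn
  | outer hfr hI =>
  cases hfr with
  | cons hfr hr =>
  have hsSt : s ∈ St := h.stack_eq ▸ List.mem_cons_self
  exact h.pop (.outer hfr fun x hx hxSt => hI x hx hxSt.1) hr.nil
    (fun hacc => .inr (not_not.1 fun hC => hnd ⟨hacc, hC⟩)) (fun hsI => absurd hsSt (hI s hsI))

theorem outerPop (h : Invariant G F O I St (.outerPop s :: k) σ τ) :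
    Invariant G F O I (St \ {s}) k σ.tail [] := by
  have hshape := h.shape
  cases hshape with
  | outer hfr _ => cases hfr
  | inner hfr _ hsI hclosed hseed hinn _ _ =>
  cases hinn with
  | nil =>
  have hsSt : s ∈ St := h.stack_eq ▸ List.mem_cons_self
  exact h.pop (.outer hfr fun x hx hxSt => hxSt.2 (hseed x hx hxSt.1)) hclosed (fun _ => .inl hsI)
    fun _ _ hu => not_transGen_stepUnder_of_closed
      (fun x hx => h.inner_closed x hx List.not_mem_nil) hu hsI hsSt

theorem innerSkip (h : Invariant G F O I St (.inner s (s' :: rest) :: k) σ τ)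
    (hSt : s' ∉ St) (hs' : s' ∈ I ∨ G.C s' ⊆ F) :
    Invariant G F O I St (.inner s rest :: k) σ τ := by
  refine { h with shape := ?_ }
  have hshape := h.shape
  cases hshape with
  | outer hfr _ => cases hfr
  | inner hfr hacc hqI hclosed hseed hinn hpath hτI =>
    cases hinn with
    | cons hinn hr =>
      exact .inner hfr hacc hqI hclosed hseed (.cons hinn (hr.tail ⟨hSt, hs'⟩)) hpath hτI

theorem innerDone (h : Invariant G F O I St (.inner s [] :: k) σ τ) :
    Invariant G F O I St k σ τ.tail := by
  have hshape := h.shape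
  cases hshape with
  | outer hfr _ => cases hfr
  | inner hfr hacc hqI hclosed hseed hinn hpath hτI =>
  cases hinn with
  | cons hinn hr =>
  refine
    { h with
      shape := .inner hfr hacc hqI hclosed hseed hinn hpath.tail fun x hx => hτI x (.tail _ hx)
      inner_closed := fun x hx hxτ => ?_ }
  by_cases hxs : x = s
  · exact .inr (hxs ▸ hr.nil)
  · exact h.inner_closed x hx fun h' => hxτ ((List.mem_cons.1 h').resolve_left hxs)

theorem innerFound (h : Invariant G F O I St (.inner s (s' :: rest) :: k) σ τ) (hs' : s' ∈ St) :
    Invariant G (F ∪ G.C s') O I St k σ τ.tail := by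
  have hshape := h.shape
  cases hshape with
  | outer hfr _ => cases hfr
  | inner hfr hacc hqI hclosed hseed hinn hpath hτI =>
  cases hinn with
  | cons hinn hr =>
  rename_i σ q τ
  have hF : F ⊆ F ∪ G.C s' := Set.subset_union_left
  have hss' : s' ∈ G.succ s := hr.1 s' List.mem_cons_self
  have hqs : ReflTransGen (Edge G) q s := (hpath.reach List.mem_cons_self).1
  obtain ⟨hinit, hs'q⟩ := h.isDFSStack.reach (h.stack_eq ▸ hs')
  have hCs : G.C s ⊆ G.C s' := C_subset_of_reflTransGen (hs'q.trans hqs)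
  refine
    { h with
      shape := .inner (hfr.mono (OuterHandled.mono hF subset_rfl)) hacc hqI
        (fun y hy => OuterHandled.mono hF subset_rfl y (hclosed y hy)) hseed
        (hinn.mono (InnerHandled.mono hF subset_rfl subset_rfl)) hpath.tail
        fun x hx => hτI x (.tail _ hx)
      outer_closed := fun x hx hxSt y hy => OuterHandled.mono hF subset_rfl y
        (h.outer_closed x hx hxSt y hy)
      inner_closed := fun x hx hxτ => ?_
      acc_mem := fun x hx hxacc => (h.acc_mem x hx hxacc).imp_right (Or.imp_right (·.trans hF))
      no_cycle := fun x hx hxacc hxSt u hu => h.no_cycle x hx hxacc hxSt u fun h' => hu (hF h')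
      found_sound := fun u hu => hu.elim (h.found_sound u) fun hu =>
        ⟨q, hacc, (h.isDFSStack.reach List.mem_cons_self).1,
          transGen_stepUnder_of_cycle hqs hss' hs'q hu⟩ }
  by_cases hxs : x = s
  · exact .inl (hxs ▸ hCs.trans Set.subset_union_right)
  · refine (h.inner_closed x hx fun h' => hxτ ((List.mem_cons.1 h').resolve_left hxs)).imp
      (·.trans hF) fun hcl y hy => InnerHandled.mono hF subset_rfl subset_rfl y (hcl y hy)

theorem innerPush (h : Invariant G F O I St (.inner s (s' :: rest) :: k) σ τ)
    (hSt : s' ∉ St) (hI : s' ∉ I) (hF : ¬ G.C s' ⊆ F) :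
    Invariant G F O (insert s' I) St (.inner s' (G.succ s') :: .inner s rest :: k) σ
      (s' :: τ) := by
  have hshape := h.shape
  cases hshape with
  | outer hfr _ => cases hfr
  | inner hfr hacc hqI hclosed hseed hinn hpath hτI =>
  cases hinn with
  | cons hinn hr =>
  rename_i σ q τ
  have hss' : s' ∈ G.succ s := hr.1 s' List.mem_cons_self
  have hs'O : s' ∈ O := by
    by_cases hsq : s = q
    · exact ((hsq ▸ hclosed) s' hss').resolve_right hF
    · have hsI : s ∈ I := hτI s List.mem_cons_self
      exact (h.outer_closed s (h.inner_subset hsI) (fun hsSt => hsq (hseed s hsI hsSt)) s'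
        hss').resolve_right hF
  have hmono := InnerHandled.mono (G := G) (F := F) (St := St) subset_rfl (Set.subset_insert s' I)
    subset_rfl
  refine
    { h with
      shape := .inner hfr hacc (Set.mem_insert_of_mem _ hqI) hclosed
        (fun x hx hxSt => (Set.mem_insert_iff.1 hx).elim (fun e => absurd (e ▸ hxSt) hSt)
          (hseed x · hxSt))
        (.cons (.cons (hinn.mono hmono) ((hr.mono hmono).tail ⟨hSt, .inl (Set.mem_insert _ _)⟩))
          .self)
        (.push hpath hss') fun x hx => ?_
      inner_subset := Set.insert_subset hs'O h.inner_subset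
      inner_closed := fun x hx hxτ => ?_
      acc_mem := fun x hx hxacc => (h.acc_mem x hx hxacc).imp_right (Or.imp_left (.inr ·))
      no_cycle := fun x hx hxacc hxSt => ?_ }
  · rcases List.mem_cons.1 hx with rfl | hx
    exacts [Set.mem_insert _ _, Set.mem_insert_of_mem _ (hτI x hx)]
  · have hxI : x ∈ I :=
      (Set.mem_insert_iff.1 hx).resolve_left fun e => hxτ (e ▸ List.mem_cons_self)
    exact (h.inner_closed x hxI fun h' => hxτ (.tail _ h')).imp_right fun hcl y hy =>
      hmono y (hcl y hy)
  · rcases Set.mem_insert_iff.1 hx with rfl | hx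
    · exact absurd (h.acc_mem x hs'O hxacc) (by simp [hSt, hI, hF])
    · exact h.no_cycle x hx hxacc hxSt

theorem mem_found_iff (h : Invariant G F O I St [] σ τ) (u : V) :
    u ∈ F ↔ HasReachableAccCycle G u := by
  have hσ : σ = [] := by
    have hshape := h.shape
    cases hshape with
    | outer hfr _ => cases hfr; rfl
    | inner _ _ _ _ _ hinn _ _ => cases hinn
  have hSt : St = ∅ := by simp [h.stack_eq, hσ]
  have hreach : ∀ y, ReflTransGen (Edge G) G.init y → OuterHandled G F O y := by
    intro y hy
    induction hy with
    | refl => exact .inl h.init_mem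
    | tail _ e ih =>
      exact ih.elim (fun hx => h.outer_closed _ hx (hSt ▸ Set.notMem_empty _) _ e)
        fun hC => .inr ((G.mono _ _ e).trans hC)
  refine ⟨h.found_sound u, fun ⟨q, hacc, hinit, hcyc⟩ => by_contra fun hu => ?_⟩
  have hq : u ∈ G.C q := mem_C_of_transGen_stepUnder hcyc
  rcases hreach q hinit with hqO | hC
  · rcases h.acc_mem q hqO hacc with hqSt | hqI | hC
    · exact (hSt ▸ hqSt : q ∈ (∅ : Set S))
    · exact h.no_cycle q hqI hacc (hSt ▸ Set.notMem_empty _) u hu hcyc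
    · exact hu (hC hq)
  · exact hu (hC hq)

end Invariant

variable (G) in
/-- Pending calls are executed eagerly: the invariant is stated for `settle G c`, so that it never
has to describe a `callOuter` or `callInner` frame. -/
def settle (c : NConfig S V) : NConfig S V :=
  match c.ctrl with
  | .callOuter s :: k =>
    ⟨c.found, insert s c.outer, c.inner, insert s c.stack, .outer s (G.succ s) :: k⟩
  | .callInner s :: k => ⟨c.found, c.outer, insert s c.inner, c.stack, .inner s (G.succ s) :: k⟩
  | _ => c

variable (G) in
def SettledInvariant (c : NConfig S V) : Prop :=
  ∃ σ τ, Invariant G (settle G c).found (settle G c).outer (settle G c).inner (settle G c).stack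
    (settle G c).ctrl σ τ

theorem Invariant.settledInvariant {F : Set V} {O I St : Set S} {ks : List (NFrame S)}
    {σ τ : List S} (h : Invariant G F O I St ks σ τ) : SettledInvariant G ⟨F, O, I, St, ks⟩ := by
  have hsettle : settle G ⟨F, O, I, St, ks⟩ = ⟨F, O, I, St, ks⟩ := by
    have hshape := h.shape
    cases hshape with
    | outer hfr _ => cases hfr <;> rfl
    | inner _ _ _ _ _ hinn _ _ => cases hinn <;> rfl
  exact ⟨σ, τ, by rw [hsettle]; exact h⟩

theorem settledInvariant_initConfig : SettledInvariant G (initConfig G) := by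
  refine ⟨[G.init], [], ?_⟩
  show Invariant G ∅ (insert G.init ∅) ∅ (insert G.init ∅) [.outer G.init (G.succ G.init)] _ _
  exact
    { shape := .outer (.cons .nil .self) (by simp)
      stack_eq := by ext; simp
      nodup := List.nodup_singleton _
      isDFSStack := .single
      init_mem := Set.mem_insert _ _
      stack_subset := subset_rfl
      inner_subset := Set.empty_subset _
      outer_closed := fun x hx hxSt => absurd hx hxSt
      inner_closed := fun x hx => absurd hx (Set.notMem_empty x)
      acc_mem := fun x hx _ => .inl hx
      no_cycle := fun x hx => absurd hx (Set.notMem_empty x)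
      found_sound := fun u hu => absurd hu (Set.notMem_empty u) }

theorem SettledInvariant.step {c c' : NConfig S V} (hstep : NStep G c c')
    (h : SettledInvariant G c) : SettledInvariant G c' := by
  obtain ⟨σ, τ, h⟩ := h
  cases hstep with
  | callOuter | callInner => exact h.settledInvariant
  | outerSkip _ _ _ _ _ _ _ _ hs' => exact (h.outerSkip hs').settledInvariant
  | outerRec _ _ _ _ _ _ _ _ hO hSt hF => exact (h.outerPush hO hSt hF).settledInvariant
  | outerAcc _ _ _ _ _ _ hacc => exact (h.startInner hacc).settledInvariant
  | outerDone _ _ _ _ _ _ hnd => exact (h.outerDone hnd).settledInvariant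
  | outerPop => exact h.outerPop.settledInvariant
  | innerFound _ _ _ _ _ _ _ _ hs' => exact (h.innerFound hs').settledInvariant
  | innerRec _ _ _ _ _ _ _ _ hSt hI hF => exact (h.innerPush hSt hI hF).settledInvariant
  | innerSkip _ _ _ _ _ _ _ _ hSt hs' => exact (h.innerSkip hSt hs').settledInvariant
  | innerDone => exact h.innerDone.settledInvariant

theorem settledInvariant_of_run {c : NConfig S V} (h : ReflTransGen (NStep G) (initConfig G) c) :
    SettledInvariant G c := by
  induction h with
  | refl => exact settledInvariant_initConfig
  | tail _ hstep ih => exact ih.step hstep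

theorem cumulative_ndfs_partial_correctness_general
    (G : NGraph S V) (v : V) (c : NConfig S V)
    (hrun : ReflTransGen (NStep G) (initConfig G) c) (hfinal : c.ctrl = []) :
    v ∈ c.found ↔
      ∃ q : S, G.acc q ∧ ReflTransGen (Edge G) G.init q ∧
        TransGen (StepUnder G v) q q := by
  obtain ⟨σ, τ, h⟩ := settledInvariant_of_run hrun
  obtain ⟨F, O, I, St, ks⟩ := c
  obtain rfl : ks = [] := hfinal
  exact h.mem_found_iff v

/-- The Cumulative NDFS algorithm returns a set `Accepted`
containing `v` iff the input graph contains an accepting cycle under `v` reachable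
from the initial state. -/
theorem cumulative_ndfs_partial_correctness
    [Finite S] (G : NGraph S V) (v : V) (c : NConfig S V)
    (hrun : ReflTransGen (NStep G) (initConfig G) c) (hfinal : c.ctrl = []) :
    v ∈ c.found ↔
      ∃ q : S, G.acc q ∧ ReflTransGen (Edge G) G.init q ∧
        TransGen (StepUnder G v) q q :=
  cumulative_ndfs_partial_correctness_general G v c hrun hfinal

end CumulativeNDFS
end PTASynth
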